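/- Let G be a profinite group and χ_1, χ_2, χ_3 ∈ H^1(G, Z/p). If the triple Massey product ⟨χ_1, χ_2, χ_3⟩ is defined (nonempty) and the cup product–restriction property holds for the pair χ_1, χ_3 (with K = ker χ_1 ∩ ker χ_3), then 0 ∈ ⟨χ_1, χ_2, χ_3⟩. -/

import Mathlib

section ContinuousCochains

variable (p : ℕ) (G : Type*) [Group G] [TopologicalSpace G] [IsTopologicalGroup G]

/-- Continuous (= locally constant) 1-cochains on `G` with values in `ℤ/p`
(trivial action). -/
abbrev Cochain1 := LocallyConstant G (ZMod p)

/-- Continuous (= locally constant) 2-cochains on `G` with values in `ℤ/p`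
(trivial action). -/
abbrev Cochain2 := LocallyConstant (G × G) (ZMod p)

variable {G}

/-- A continuous 1-cochain is a 1-cocycle (for the trivial action) iff it is a
group homomorphism `G → ℤ/p`. -/
def IsHom1 (χ : Cochain1 p G) : Prop := ∀ g h : G, χ (g * h) = χ g + χ h

/-- The 2-cocycle condition (trivial action, inhomogeneous cochains). -/
def IsCocycle2 (f : Cochain2 p G) : Prop :=
  ∀ g h k : G, f (h, k) - f (g * h, k) + f (g, h * k) - f (g, h) = 0

/-- The differential `∂ : C¹ → C²`, `(∂c)(σ, τ) = c σ − c (στ) + c τ`. -/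
def d1 (c : Cochain1 p G) : Cochain2 p G :=
  c.comap ⟨Prod.fst, continuous_fst⟩ - c.comap ⟨fun x : G × G => x.1 * x.2, continuous_mul⟩
    + c.comap ⟨Prod.snd, continuous_snd⟩

/-- The cup product of two continuous 1-cochains:
`(χ ⌣ φ)(σ, τ) = χ σ · φ τ`. -/
def cup (χ φ : Cochain1 p G) : Cochain2 p G :=
  χ.comap ⟨Prod.fst, continuous_fst⟩ * φ.comap ⟨Prod.snd, continuous_snd⟩

/-- Restriction of a continuous 2-cochain to a (closed) subgroup `K ≤ G`. -/
def res2 (K : Subgroup G) (f : Cochain2 p G) : Cochain2 p K :=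
  f.comap ⟨fun x : K × K => ((x.1 : G), (x.2 : G)),
    (continuous_subtype_val.comp continuous_fst).prodMk
      (continuous_subtype_val.comp continuous_snd)⟩

/-- The kernel of a continuous homomorphism `χ : G → ℤ/p`, as a subgroup of `G`. -/
def homKer (χ : Cochain1 p G) (hχ : IsHom1 p χ) : Subgroup G where
  carrier := {g | χ g = 0}
  one_mem' := by
    have h := hχ 1 1
    rw [mul_one] at h
    exact (left_eq_add.mp h)
  mul_mem' := by
    intro a b ha hb
    have : χ (a * b) = χ a + χ b := hχ a b
    simp only [Set.mem_setOf_eq] at ha hb ⊢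
    rw [this, ha, hb, add_zero]
  inv_mem' := by
    intro a ha
    simp only [Set.mem_setOf_eq] at ha ⊢
    have h1 : χ 1 = 0 := by
      have h := hχ 1 1
      rw [mul_one] at h
      exact (left_eq_add.mp h)
    have h := hχ a a⁻¹
    rw [mul_inv_cancel, h1, ha, zero_add] at h
    exact h.symm

end ContinuousCochains

/-!
Pick a defining system `c₁₂, c₂₃`; its value `α = -(χ₁ ⌣ c₂₃) - c₁₂ ⌣ χ₃` is a 2-cocycle
which vanishes identically on `K × K`, since `χ₁` and `χ₃` vanish on `K`. The cup
product–restriction property then writes `α = χ₁ ⌣ β₁ + χ₃ ⌣ β₃ + ∂b` with homomorphisms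
`β₁, β₃`. Replacing the defining system by `c₁₂ - β₃, c₂₃ + β₁` changes the value by
`-(χ₁ ⌣ β₁) + β₃ ⌣ χ₃`, and `β₃ ⌣ χ₃ ≡ -(χ₃ ⌣ β₃)` modulo coboundaries, so the new value is
a coboundary.
-/

section MasseyProduct

variable {p : ℕ} {G : Type*} [TopologicalSpace G]

@[simp]
lemma cup_apply (χ φ : Cochain1 p G) (x : G × G) : cup p χ φ x = χ x.1 * φ x.2 :=
  rfl

/-- The value of the defining system `c₁₂, c₂₃` of `⟨χ₁, χ₂, χ₃⟩`. -/
def masseyValue (χ₁ χ₃ c₁₂ c₂₃ : Cochain1 p G) : Cochain2 p G :=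
  -(cup p χ₁ c₂₃) - cup p c₁₂ χ₃

lemma masseyValue_sub_add (χ₁ χ₃ c₁₂ c₂₃ β₁ β₃ : Cochain1 p G) :
    masseyValue χ₁ χ₃ (c₁₂ - β₃) (c₂₃ + β₁)
      = masseyValue χ₁ χ₃ c₁₂ c₂₃ - cup p χ₁ β₁ + cup p β₃ χ₃ := by
  ext x
  simp only [masseyValue, LocallyConstant.sub_apply, LocallyConstant.add_apply,
    LocallyConstant.neg_apply, cup_apply]
  ring

variable [Group G]

@[simp]
lemma res2_apply (K : Subgroup G) (f : Cochain2 p G) (x : K × K) :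
    res2 p K f x = f ((x.1 : G), (x.2 : G)) :=
  rfl

lemma res2_masseyValue_eq_zero {χ₁ χ₃ : Cochain1 p G} (c₁₂ c₂₃ : Cochain1 p G) {K : Subgroup G}
    (hK₁ : ∀ k ∈ K, χ₁ k = 0) (hK₃ : ∀ k ∈ K, χ₃ k = 0) :
    res2 p K (masseyValue χ₁ χ₃ c₁₂ c₂₃) = 0 := by
  ext x
  simp only [res2_apply, masseyValue, LocallyConstant.sub_apply, LocallyConstant.neg_apply,
    cup_apply, hK₁ x.1 x.1.2, hK₃ x.2 x.2.2, LocallyConstant.zero_apply]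
  ring

variable [IsTopologicalGroup G]

@[simp]
lemma d1_apply (c : Cochain1 p G) (x : G × G) : d1 p c x = c x.1 - c (x.1 * x.2) + c x.2 :=
  rfl

lemma d1_add (c c' : Cochain1 p G) : d1 p (c + c') = d1 p c + d1 p c' := by
  ext x
  simp only [d1_apply, LocallyConstant.add_apply]
  ring

lemma d1_sub (c c' : Cochain1 p G) : d1 p (c - c') = d1 p c - d1 p c' := by
  ext x
  simp only [d1_apply, LocallyConstant.sub_apply]
  ring

lemma d1_zero : d1 p (0 : Cochain1 p G) = 0 := by
  simpa using d1_sub (0 : Cochain1 p G) 0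

lemma d1_eq_zero_of_isHom1 {β : Cochain1 p G} (hβ : IsHom1 p β) : d1 p β = 0 := by
  ext x
  simp [hβ x.1 x.2]

lemma d1_mul_of_isHom1 {χ φ : Cochain1 p G} (hχ : IsHom1 p χ) (hφ : IsHom1 p φ) :
    d1 p (χ * φ) = -(cup p χ φ + cup p φ χ) := by
  ext x
  simp only [d1_apply, cup_apply, LocallyConstant.mul_apply, LocallyConstant.neg_apply,
    LocallyConstant.add_apply, hχ x.1 x.2, hφ x.1 x.2]
  ring

lemma isCocycle2_masseyValue {χ₁ χ₂ χ₃ c₁₂ c₂₃ : Cochain1 p G}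
    (h₁ : IsHom1 p χ₁) (h₃ : IsHom1 p χ₃)
    (h₁₂ : d1 p c₁₂ = -(cup p χ₁ χ₂)) (h₂₃ : d1 p c₂₃ = -(cup p χ₂ χ₃)) :
    IsCocycle2 p (masseyValue χ₁ χ₃ c₁₂ c₂₃) := by
  intro g h k
  have e₁₂ := DFunLike.congr_fun h₁₂ (g, h)
  have e₂₃ := DFunLike.congr_fun h₂₃ (h, k)
  simp only [d1_apply, cup_apply, LocallyConstant.neg_apply] at e₁₂ e₂₃
  simp only [masseyValue, LocallyConstant.sub_apply, LocallyConstant.neg_apply, cup_apply]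
  linear_combination c₂₃ k * h₁ g h - c₁₂ g * h₃ h k - χ₃ k * e₁₂ + χ₁ g * e₂₃

end MasseyProduct

theorem massey_vanishes_of_cupRes_general (p : ℕ)
    (G : Type*) [Group G] [TopologicalSpace G] [IsTopologicalGroup G]
    (χ₁ χ₂ χ₃ : Cochain1 p G)
    (h₁ : IsHom1 p χ₁) (h₃ : IsHom1 p χ₃)
    -- the triple Massey product is defined: a defining system exists
    (hdefined : ∃ c₁₂ c₂₃ : Cochain1 p G,
      d1 p c₁₂ = -(cup p χ₁ χ₂) ∧ d1 p c₂₃ = -(cup p χ₂ χ₃))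
    -- the cup product–restriction property for `χ₁, χ₃`, where `K = ker χ₁ ∩ ker χ₃`
    (hcupres : ∀ α : Cochain2 p G, IsCocycle2 p α →
      (∃ b : Cochain1 p (homKer p χ₁ h₁ ⊓ homKer p χ₃ h₃ : Subgroup G),
          res2 p (homKer p χ₁ h₁ ⊓ homKer p χ₃ h₃) α = d1 p b) →
        ∃ β₁ β₃ : Cochain1 p G, IsHom1 p β₁ ∧ IsHom1 p β₃ ∧
          ∃ b : Cochain1 p G, α = cup p χ₁ β₁ + cup p χ₃ β₃ + d1 p b) :
    -- conclusion: zero belongs to the triple Massey product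
    ∃ c₁₂ c₂₃ b : Cochain1 p G,
      d1 p c₁₂ = -(cup p χ₁ χ₂) ∧ d1 p c₂₃ = -(cup p χ₂ χ₃) ∧
        -(cup p χ₁ c₂₃) - cup p c₁₂ χ₃ = d1 p b := by
  obtain ⟨c₁₂, c₂₃, h₁₂, h₂₃⟩ := hdefined
  have hres :
      res2 p (homKer p χ₁ h₁ ⊓ homKer p χ₃ h₃) (masseyValue χ₁ χ₃ c₁₂ c₂₃) = d1 p 0 := by
    rw [d1_zero]
    exact res2_masseyValue_eq_zero c₁₂ c₂₃ (fun k hk => (Subgroup.mem_inf.mp hk).1)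
      (fun k hk => (Subgroup.mem_inf.mp hk).2)
  obtain ⟨β₁, β₃, hβ₁, hβ₃, b, hα⟩ :=
    hcupres _ (isCocycle2_masseyValue h₁ h₃ h₁₂ h₂₃) ⟨0, hres⟩
  refine ⟨c₁₂ - β₃, c₂₃ + β₁, b - χ₃ * β₃, ?_, ?_, ?_⟩
  · rw [d1_sub, d1_eq_zero_of_isHom1 hβ₃, sub_zero, h₁₂]
  · rw [d1_add, d1_eq_zero_of_isHom1 hβ₁, add_zero, h₂₃]
  · change masseyValue χ₁ χ₃ (c₁₂ - β₃) (c₂₃ + β₁) = _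
    rw [masseyValue_sub_add, hα, d1_sub, d1_mul_of_isHom1 h₃ hβ₃]
    abel

/-- Let `G` be a profinite group and `χ₁, χ₂, χ₃ ∈ H¹(G, ℤ/p)`.
If the triple Massey product `⟨χ₁, χ₂, χ₃⟩` is defined (nonempty) and the cup
product–restriction property holds for the pair `χ₁, χ₃` (with
`K = ker χ₁ ∩ ker χ₃`), then `0 ∈ ⟨χ₁, χ₂, χ₃⟩`. -/
theorem massey_vanishes_of_cupRes (p : ℕ) [Fact p.Prime]
    (G : Type*) [Group G] [TopologicalSpace G] [IsTopologicalGroup G]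
    [CompactSpace G] [TotallyDisconnectedSpace G] [T2Space G]
    (χ₁ χ₂ χ₃ : Cochain1 p G)
    (h₁ : IsHom1 p χ₁) (h₂ : IsHom1 p χ₂) (h₃ : IsHom1 p χ₃)
    -- the triple Massey product is defined: a defining system exists
    (hdefined : ∃ c₁₂ c₂₃ : Cochain1 p G,
      d1 p c₁₂ = -(cup p χ₁ χ₂) ∧ d1 p c₂₃ = -(cup p χ₂ χ₃))
    -- the cup product–restriction property for `χ₁, χ₃`, where `K = ker χ₁ ∩ ker χ₃`
    (hcupres : ∀ α : Cochain2 p G, IsCocycle2 p α →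
      (∃ b : Cochain1 p (homKer p χ₁ h₁ ⊓ homKer p χ₃ h₃ : Subgroup G),
          res2 p (homKer p χ₁ h₁ ⊓ homKer p χ₃ h₃) α = d1 p b) →
        ∃ β₁ β₃ : Cochain1 p G, IsHom1 p β₁ ∧ IsHom1 p β₃ ∧
          ∃ b : Cochain1 p G, α = cup p χ₁ β₁ + cup p χ₃ β₃ + d1 p b) :
    -- conclusion: zero belongs to the triple Massey product
    ∃ c₁₂ c₂₃ b : Cochain1 p G,
      d1 p c₁₂ = -(cup p χ₁ χ₂) ∧ d1 p c₂₃ = -(cup p χ₂ χ₃) ∧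
        -(cup p χ₁ c₂₃) - cup p c₁₂ χ₃ = d1 p b :=
  massey_vanishes_of_cupRes_general p G χ₁ χ₂ χ₃ h₁ h₃ hdefined hcupres
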